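/- For every n ≥ 1, every homogeneous element of total degree 3 of the toric ideal I_{K_n} of the complete graph K_n lies in the ideal of R_{K_n} generated by the elements of I_{K_n} of total degree at most 2; equivalently, I_{K_n} has no minimal generators of degree 3. -/

import Mathlib

open MvPolynomial Finset

namespace BinaryGraphModels

variable {V : Type} [Fintype V] [DecidableEq V]

/-- The monomial map `φ_G` of the binary graph model: the variable `p_I` is sent to the
product over edges `{j,k}` of the variable `t^{jk}_{I(j)I(k)}` (encoded as the unordered pair
`{(j, I j), (k, I k)}`) times the product over isolated vertices `l` of `t^{l}_{I(l)}`. -/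
noncomputable def phi (G : SimpleGraph V) :
    MvPolynomial (V → Bool) ℂ →ₐ[ℂ] MvPolynomial (Sym2 (V × Bool) ⊕ (V × Bool)) ℂ := by
  letI : DecidableRel G.Adj := Classical.decRel _
  exact aeval fun I : V → Bool =>
    (∏ e ∈ G.edgeFinset,
      (X (Sum.inl (Sym2.map (fun v => (v, I v)) e)) :
        MvPolynomial (Sym2 (V × Bool) ⊕ (V × Bool)) ℂ)) *
    ∏ l ∈ univ.filter (fun l : V => ∀ k, ¬ G.Adj l k), X (Sum.inr (l, I l))

/-- The toric ideal `I_G` of the binary graph model of `G`. -/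
noncomputable def toricIdeal (G : SimpleGraph V) : Ideal (MvPolynomial (V → Bool) ℂ) :=
  RingHom.ker (phi G).toRingHom

/-- `I_G` is generated in degree at most `d`. -/
def GenInDegLE (G : SimpleGraph V) (d : ℕ) : Prop :=
  toricIdeal G =
    Ideal.span {f : MvPolynomial (V → Bool) ℂ | f ∈ toricIdeal G ∧ f.totalDegree ≤ d}

/-- The Markov width `μ(G)`: the least `d` such that `I_G` is generated in degree `≤ d`. -/
noncomputable def markovWidth (G : SimpleGraph V) : ℕ :=
  sInf {d : ℕ | GenInDegLE G d}

/-- `f` is a minimal generator of `I_G`, i.e. `f ∈ I_G` and `f ∉ 𝔪 · I_G` where `𝔪` is the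
irrelevant maximal ideal generated by all the variables. -/
def IsMinimalGenerator (G : SimpleGraph V) (f : MvPolynomial (V → Bool) ℂ) : Prop :=
  f ∈ toricIdeal G ∧
    f ∉ Ideal.span (Set.range (X : (V → Bool) → MvPolynomial (V → Bool) ℂ)) * toricIdeal G

/-- Two integer tables have the same `G`-marginals: equal two-way marginals along every edge
and equal one-way marginals at every isolated vertex. -/
def MarginalsEq (G : SimpleGraph V) (v₁ v₂ : (V → Bool) → ℤ) : Prop :=
  (∀ j k : V, G.Adj j k → ∀ a b : Bool,
    (∑ I : V → Bool, if I j = a ∧ I k = b then v₁ I else 0) =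
    (∑ I : V → Bool, if I j = a ∧ I k = b then v₂ I else 0)) ∧
  (∀ l : V, (∀ k, ¬ G.Adj l k) → ∀ a : Bool,
    (∑ I : V → Bool, if I l = a then v₁ I else 0) =
    (∑ I : V → Bool, if I l = a then v₂ I else 0))

/-- `B` is a Markov basis for `G`: any two nonnegative tables with the same `G`-marginals are
connected by a path of moves from `±B` staying nonnegative. -/
def IsMarkovBasis (G : SimpleGraph V) (B : Finset ((V → Bool) → ℤ)) : Prop :=
  ∀ v₁ v₂ : (V → Bool) → ℤ, (∀ I, 0 ≤ v₁ I) → (∀ I, 0 ≤ v₂ I) →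
    MarginalsEq G v₁ v₂ →
    ∃ L : List ((V → Bool) → ℤ),
      (∀ u ∈ L, u ∈ B ∨ -u ∈ B) ∧
      v₁ + L.sum = v₂ ∧
      ∀ n : ℕ, n ≤ L.length → ∀ I, 0 ≤ (v₁ + (L.take n).sum) I

/-- The binomial `p^{u⁺} - p^{u⁻}` associated to an integer table `u`. -/
noncomputable def moveBinomial (u : (V → Bool) → ℤ) : MvPolynomial (V → Bool) ℂ :=
  (∏ I : V → Bool, X I ^ (u I).toNat) - ∏ I : V → Bool, X I ^ (-u I).toNat

end BinaryGraphModels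

/-!
A degree-`m` monomial in the `p_I` is a multiset of `m` index strings, and `φ_{K_n}` sends it to
the monomial recording the one- and two-way marginals of that multiset. For `m ≤ 3` these
marginals determine the multiset: if some coordinate `j` is not constant on it, one of the two
values at `j` occurs exactly once, the pair marginals through `j` pin down the string carrying it,
and that string can be removed. Hence `φ_{K_n}` is injective on monomials of degree `m ≤ 3`, and
`I_{K_n}` has no nonzero homogeneous element of such a degree.
-/

namespace MvPolynomial

theorem eq_zero_of_map_eq_zero_of_injOn {σ τ R : Type*} [CommSemiring R]
    (ψ : MvPolynomial σ R →ₐ[R] MvPolynomial τ R) (e : (σ →₀ ℕ) → τ →₀ ℕ)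
    (hψ : ∀ d c, ψ (monomial d c) = monomial (e d) c) {f : MvPolynomial σ R}
    (he : Set.InjOn e f.support) (hf : ψ f = 0) : f = 0 := by
  classical
  ext d
  by_contra hd
  have hcoeff : coeff (e d) (ψ f) = coeff d f := by
    conv_lhs => rw [f.as_sum, map_sum]
    simp only [hψ, coeff_sum, coeff_monomial]
    rw [Finset.sum_eq_single d
      (fun d' hd' hne => if_neg fun h => hne (he hd' (mem_support_iff.2 hd) h))
      (fun h => absurd (mem_support_iff.2 hd) h), if_pos rfl]
  exact hd (by rw [← hcoeff, hf, coeff_zero, coeff_zero])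

end MvPolynomial

namespace BinaryGraphModels

section Marginals

variable {V : Type*}

theorem exists_countP_eq_one_of_ne {S : Multiset (V → Bool)} (hS : S.card ≤ 3)
    {x y : V → Bool} (hx : x ∈ S) (hy : y ∈ S) {j : V} (hxy : x j ≠ y j) :
    ∃ a, S.countP (· j = a) = 1 := by
  have hcard : S.countP (· j = true) + S.countP (· j = false) = S.card := by
    simp only [Multiset.card_eq_countP_add_countP (· j = true) S, Bool.not_eq_true]
  have hpos (a : Bool) : 0 < S.countP (· j = a) := by
    have : x j = a ∨ y j = a := by revert hxy; cases a <;> cases x j <;> cases y j <;> simp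
    rcases this with h | h
    · exact Multiset.countP_pos.2 ⟨x, hx, h⟩
    · exact Multiset.countP_pos.2 ⟨y, hy, h⟩
  have htrue := hpos true
  have hfalse := hpos false
  by_cases h : S.countP (· j = true) = 1
  · exact ⟨true, h⟩
  · exact ⟨false, by omega⟩

/-- The diagonal `j = k` records the one-way marginals. -/
def TwoWayMarginalsEq (S T : Multiset (V → Bool)) : Prop :=
  ∀ j k a b, S.countP (fun I => I j = a ∧ I k = b) = T.countP (fun I => I j = a ∧ I k = b)

namespace TwoWayMarginalsEq

variable {S T : Multiset (V → Bool)}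

theorem countP_eq (h : TwoWayMarginalsEq S T) (j : V) (a : Bool) :
    S.countP (· j = a) = T.countP (· j = a) := by
  simpa only [and_self] using h j j a a

theorem of_cons {u : V → Bool} (h : TwoWayMarginalsEq (u ::ₘ S) (u ::ₘ T)) :
    TwoWayMarginalsEq S T := fun j k a b => by
  have := h j k a b
  rwa [Multiset.countP_cons, Multiset.countP_cons, Nat.add_right_cancel_iff] at this

theorem mem_of_countP_eq_one (h : TwoWayMarginalsEq S T) {j : V} {a : Bool}
    (hS : S.countP (· j = a) = 1) : ∃ u ∈ S, u ∈ T := by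
  classical
  obtain ⟨u, hu⟩ := Multiset.card_eq_one.1 ((Multiset.countP_eq_card_filter _ _).symm.trans hS)
  obtain ⟨v, hv⟩ := Multiset.card_eq_one.1
    ((Multiset.countP_eq_card_filter _ _).symm.trans ((h.countP_eq j a).symm.trans hS))
  refine ⟨u, Multiset.mem_of_mem_filter (hu ▸ Multiset.mem_singleton_self u), ?_⟩
  suffices u = v from this ▸ Multiset.mem_of_mem_filter (hv ▸ Multiset.mem_singleton_self v)
  funext k
  have hk := h k j (u k) a
  rw [← Multiset.countP_filter, ← Multiset.countP_filter, hu, hv] at hk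
  simpa [← Multiset.cons_zero, Multiset.countP_cons, eq_comm] using hk

theorem exists_mem_mem (h : TwoWayMarginalsEq S T) (hcard : S.card = T.card)
    (hpos : 0 < S.card) (h3 : S.card ≤ 3) : ∃ u ∈ S, u ∈ T := by
  by_cases hconst : ∀ x ∈ S, ∀ y ∈ S, x = y
  · obtain ⟨x, hx⟩ := Multiset.card_pos_iff_exists_mem.1 hpos
    obtain ⟨t, ht⟩ := Multiset.card_pos_iff_exists_mem.1 (hcard ▸ hpos)
    have htx : t = x := funext fun j => by
      have hall : S.countP (· j = x j) = S.card :=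
        Multiset.countP_eq_card.2 fun y hy => by rw [hconst y hy x hx]
      rw [h.countP_eq, hcard, Multiset.countP_eq_card] at hall
      exact hall t ht
    exact ⟨x, hx, htx ▸ ht⟩
  · push Not at hconst
    obtain ⟨x, hx, y, hy, hxy⟩ := hconst
    obtain ⟨j, hj⟩ := Function.ne_iff.1 hxy
    obtain ⟨a, ha⟩ := exists_countP_eq_one_of_ne h3 hx hy hj
    exact h.mem_of_countP_eq_one ha

theorem eq_of_card_le_three (h : TwoWayMarginalsEq S T) (hcard : S.card = T.card)
    (h3 : S.card ≤ 3) : S = T := by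
  classical
  induction hn : S.card generalizing S T with
  | zero => rw [Multiset.card_eq_zero.1 hn, Multiset.card_eq_zero.1 (hcard.symm.trans hn)]
  | succ n ih =>
    obtain ⟨u, huS, huT⟩ := h.exists_mem_mem hcard (by omega) h3
    obtain ⟨S, rfl⟩ : ∃ S', S = u ::ₘ S' := ⟨_, (Multiset.cons_erase huS).symm⟩
    obtain ⟨T, rfl⟩ : ∃ T', T = u ::ₘ T' := ⟨_, (Multiset.cons_erase huT).symm⟩
    simp only [Multiset.card_cons] at hn hcard h3
    rw [ih h.of_cons (by omega) (by omega) (by omega)]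

end TwoWayMarginalsEq

end Marginals

theorem sym2_map_eq_mk_iff {α β : Type*} (f : α → β) (e : Sym2 α) (j k : α) (a b : β) :
    e.map (fun v => (v, f v)) = s((j, a), (k, b)) ↔ e = s(j, k) ∧ f j = a ∧ f k = b := by
  induction e using Sym2.inductionOn with
  | hf x y =>
    simp only [Sym2.map_mk, Sym2.eq_iff, Prod.mk.injEq]
    constructor
    · rintro (⟨⟨rfl, rfl⟩, rfl, rfl⟩ | ⟨⟨rfl, rfl⟩, rfl, rfl⟩) <;> simp
    · rintro ⟨⟨rfl, rfl⟩ | ⟨rfl, rfl⟩, rfl, rfl⟩ <;> simp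

variable {V : Type} [Fintype V]

noncomputable def indexExponent (G : SimpleGraph V) (I : V → Bool) :
    Sym2 (V × Bool) ⊕ (V × Bool) →₀ ℕ := by
  -- the instance chosen in `phi`, so that `phi_X` holds by unfolding
  letI : DecidableRel G.Adj := Classical.decRel _
  exact (∑ e ∈ G.edgeFinset, Finsupp.single (Sum.inl (Sym2.map (fun v => (v, I v)) e)) 1) +
    ∑ l ∈ univ.filter (fun l : V => ∀ k, ¬ G.Adj l k), Finsupp.single (Sum.inr (l, I l)) 1

noncomputable def monomialExponent (G : SimpleGraph V) (d : (V → Bool) →₀ ℕ) :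
    Sym2 (V × Bool) ⊕ (V × Bool) →₀ ℕ :=
  d.sum fun I n => n • indexExponent G I

theorem phi_X (G : SimpleGraph V) (I : V → Bool) :
    phi G (X I) = monomial (indexExponent G I) 1 := by
  rw [phi, indexExponent, aeval_X, ← mul_one (1 : ℂ), ← monomial_mul, monomial_sum_one,
    monomial_sum_one]
  rfl

theorem phi_monomial (G : SimpleGraph V) (d : (V → Bool) →₀ ℕ) (c : ℂ) :
    phi G (monomial d c) = monomial (monomialExponent G d) c := by
  rw [monomial_eq, map_mul, algHom_C, map_finsuppProd, monomialExponent,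
    monomial_finsupp_sum_index, algebraMap_eq]
  simp only [map_pow, phi_X, monomial_pow, one_pow]

theorem monomialExponent_apply (G : SimpleGraph V) (d : (V → Bool) →₀ ℕ)
    {z : Sym2 (V × Bool) ⊕ (V × Bool)} {p : (V → Bool) → Prop} [DecidablePred p]
    (hz : ∀ I, indexExponent G I z = if p I then 1 else 0) :
    monomialExponent G d z = (Finsupp.toMultiset d).countP p := by
  induction d using Finsupp.induction_linear with
  | zero => simp [monomialExponent]
  | add d₁ d₂ h₁ h₂ =>
    rw [monomialExponent, Finsupp.sum_add_index' (h := fun I n => n • indexExponent G I)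
        (fun _ => zero_smul ℕ _) (fun _ _ _ => add_smul _ _ _),
      Finsupp.add_apply, ← monomialExponent, ← monomialExponent, h₁, h₂, map_add,
      Multiset.countP_add]
  | single I n =>
    simp [monomialExponent, hz, Multiset.countP_nsmul, ← Multiset.cons_zero, Multiset.countP_cons]

theorem indexExponent_inl_of_adj {G : SimpleGraph V} (I : V → Bool) {j k : V} (hjk : G.Adj j k)
    (a b : Bool) :
    indexExponent G I (Sum.inl s((j, a), (k, b))) = if I j = a ∧ I k = b then 1 else 0 := by
  classical
  simp only [indexExponent, Finsupp.add_apply, Finsupp.finsetSum_apply, Finsupp.single_apply,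
    Sum.inl.injEq, reduceCtorEq, if_false, Finset.sum_const_zero, add_zero, sym2_map_eq_mk_iff]
  simp [ite_and, Finset.sum_ite_eq', hjk]

theorem indexExponent_inr_of_isolated {G : SimpleGraph V} (I : V → Bool) {l : V}
    (hl : ∀ k, ¬ G.Adj l k) (a : Bool) :
    indexExponent G I (Sum.inr (l, a)) = if I l = a then 1 else 0 := by
  classical
  simp only [indexExponent, Finsupp.add_apply, Finsupp.finsetSum_apply, Finsupp.single_apply,
    Sum.inr.injEq, reduceCtorEq, if_false, Finset.sum_const_zero, zero_add, Prod.mk.injEq]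
  simp [ite_and, Finset.sum_ite_eq', hl]

theorem twoWayMarginalsEq_of_monomialExponent_top_eq {d d' : (V → Bool) →₀ ℕ}
    (h : monomialExponent ⊤ d = monomialExponent ⊤ d') :
    TwoWayMarginalsEq (Finsupp.toMultiset d) (Finsupp.toMultiset d') := by
  have pair {j k : V} (hjk : j ≠ k) (a b : Bool) :
      (Finsupp.toMultiset d).countP (fun I => I j = a ∧ I k = b) =
        (Finsupp.toMultiset d').countP (fun I => I j = a ∧ I k = b) := by
    have hz := (indexExponent_inl_of_adj (G := ⊤) · ((SimpleGraph.top_adj j k).2 hjk) a b)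
    rw [← monomialExponent_apply ⊤ d hz, ← monomialExponent_apply ⊤ d' hz, h]
  have single (j : V) (a : Bool) :
      (Finsupp.toMultiset d).countP (· j = a) = (Finsupp.toMultiset d').countP (· j = a) := by
    by_cases hj : ∃ k, j ≠ k
    · obtain ⟨k, hjk⟩ := hj
      have split (S : Multiset (V → Bool)) : S.countP (· j = a) =
          S.countP (fun I => I j = a ∧ I k = true) +
            S.countP (fun I => I j = a ∧ I k = false) := by
        rw [Multiset.countP_eq_countP_filter_add S _ (· k = true), Multiset.countP_filter,
          Multiset.countP_filter]
        simp only [Bool.not_eq_true]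
      rw [split, split, pair hjk, pair hjk]
    · have hz := (indexExponent_inr_of_isolated (G := ⊤) · (by simpa using hj) a)
      rw [← monomialExponent_apply ⊤ d hz, ← monomialExponent_apply ⊤ d' hz, h]
  intro j k a b
  rcases eq_or_ne j k with rfl | hjk
  · rcases eq_or_ne a b with rfl | hab
    · simpa only [and_self] using single j a
    · have hnone (S : Multiset (V → Bool)) : S.countP (fun I => I j = a ∧ I j = b) = 0 :=
        Multiset.countP_eq_zero.2 fun _ _ hI => hab (hI.1.symm.trans hI.2)
      rw [hnone, hnone]
  · exact pair hjk a b

theorem monomialExponent_top_injOn {m : ℕ} (hm : m ≤ 3) :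
    Set.InjOn (monomialExponent (⊤ : SimpleGraph V)) {d | d.degree = m} := by
  classical
  intro d hd d' hd' h
  have hcard (d : (V → Bool) →₀ ℕ) : (Finsupp.toMultiset d).card = d.degree := by
    rw [Finsupp.card_toMultiset, Finsupp.degree_apply, Finsupp.sum]
    rfl
  have key := (twoWayMarginalsEq_of_monomialExponent_top_eq h).eq_of_card_le_three
    (by rw [hcard, hcard, hd, hd']) (by rw [hcard, hd]; exact hm)
  rw [← Finsupp.toMultiset_toFinsupp d, ← Finsupp.toMultiset_toFinsupp d', key]

theorem eq_zero_of_mem_toricIdeal_top {f : MvPolynomial (V → Bool) ℂ} {m : ℕ}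
    (hf : f ∈ toricIdeal ⊤) (hh : f.IsHomogeneous m) (hm : m ≤ 3) : f = 0 := by
  refine eq_zero_of_map_eq_zero_of_injOn (phi ⊤) (monomialExponent ⊤) (phi_monomial ⊤)
    ((monomialExponent_top_injOn hm).mono fun d hd => ?_) hf
  rw [Set.mem_ofPred_eq, Finsupp.degree_eq_weight_one]
  exact hh (mem_support_iff.1 hd)

theorem completeGraph_no_cubic_generators_general (n : ℕ) :
    (∀ f ∈ toricIdeal (⊤ : SimpleGraph (Fin n)), f.IsHomogeneous 3 →
      f ∈ Ideal.span {g : MvPolynomial (Fin n → Bool) ℂ |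
        g ∈ toricIdeal (⊤ : SimpleGraph (Fin n)) ∧ g.totalDegree ≤ 2}) ∧
    ∀ f : MvPolynomial (Fin n → Bool) ℂ, f.IsHomogeneous 3 →
      ¬ IsMinimalGenerator (⊤ : SimpleGraph (Fin n)) f := by
  refine ⟨fun f hf hh => ?_, fun f hh ⟨hf, hnot⟩ => ?_⟩
  · rw [eq_zero_of_mem_toricIdeal_top hf hh le_rfl]
    exact zero_mem _
  · rw [eq_zero_of_mem_toricIdeal_top hf hh le_rfl] at hnot
    exact hnot (zero_mem _)

/-- for every `n ≥ 1`, every homogeneous element of degree 3 of the toric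
ideal of the complete graph `K_n` lies in the ideal generated by the elements of the toric
ideal of degree at most 2; equivalently, `I_{K_n}` has no minimal generators of degree 3. -/
theorem completeGraph_no_cubic_generators (n : ℕ) (hn : 1 ≤ n) :
    (∀ f ∈ toricIdeal (⊤ : SimpleGraph (Fin n)), f.IsHomogeneous 3 →
      f ∈ Ideal.span {g : MvPolynomial (Fin n → Bool) ℂ |
        g ∈ toricIdeal (⊤ : SimpleGraph (Fin n)) ∧ g.totalDegree ≤ 2}) ∧
    ∀ f : MvPolynomial (Fin n → Bool) ℂ, f.IsHomogeneous 3 →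
      ¬ IsMinimalGenerator (⊤ : SimpleGraph (Fin n)) f :=
  completeGraph_no_cubic_generators_general n

end BinaryGraphModels
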